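/- arXiv:2110.07945 — 2 statements merged into one kernel-verified Lean document; each statement's English description precedes it below -/
import Mathlib

section
/- If an ideal I on ω is not an HL ideal, then there exists X ∈ I⁺ such that ED ≤_K I↾X, where I↾X = {A ∩ X : A ∈ I} is the restriction of I to X. -/
open Set

/-- `p ⊆ 2^{<ω}` is a tree: nonempty, closed under initial segments,
without maximal elements. -/
def IsTree (p : Set (List Bool)) : Prop :=
  p.Nonempty ∧ (∀ s ∈ p, ∀ t : List Bool, t <+: s → t ∈ p) ∧
    ∀ s ∈ p, ∃ t ∈ p, s <+: t ∧ s ≠ t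

/-- `p` is a perfect tree: a tree in which every node has two
incomparable extensions in `p`. -/
def IsPerfectTree (p : Set (List Bool)) : Prop :=
  IsTree p ∧ ∀ s ∈ p, ∃ t₀ ∈ p, ∃ t₁ ∈ p,
    s <+: t₀ ∧ s <+: t₁ ∧ ¬ t₀ <+: t₁ ∧ ¬ t₁ <+: t₀

/-- `p↾A`: the nodes of `p` whose length belongs to `A`. -/
def restrictTree (p : Set (List Bool)) (A : Set ℕ) : Set (List Bool) :=
  {s ∈ p | s.length ∈ A}

/-- `R` is a Halpern–Läuchli family: for every coloring `c : 2^{<ω} → 2`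
there are a perfect tree `p` and `A ∈ R` with `c` constant on `p↾A`. -/
def IsHLFamily (R : Set (Set ℕ)) : Prop :=
  ∀ c : List Bool → Bool, ∃ p : Set (List Bool), ∃ A ∈ R,
    IsPerfectTree p ∧ ∃ i : Bool, ∀ s ∈ restrictTree p A, c s = i

/-- `x ∈ 2^ω` is a branch of `p`. -/
def IsBranch (p : Set (List Bool)) (x : ℕ → Bool) : Prop :=
  ∀ n : ℕ, (List.ofFn fun i : Fin n => x i) ∈ p

/-- `R` is a reaping family. -/
def IsReapingFamily (R : Set (Set ℕ)) : Prop :=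
  ∀ B : Set ℕ, B.Infinite → ∃ A ∈ R, A ⊆ B ∨ A ∩ B = ∅

/-- `I` is an ideal on `X`: contains all finite sets, is proper, and is
closed under subsets and finite unions. -/
def IsIdealOn {X : Type*} (I : Set (Set X)) : Prop :=
  (∀ A : Set X, A.Finite → A ∈ I) ∧ (univ : Set X) ∉ I ∧
    (∀ A B : Set X, A ⊆ B → B ∈ I → A ∈ I) ∧
    ∀ A B : Set X, A ∈ I → B ∈ I → A ∪ B ∈ I

/-- An ideal `I` on `ω` is HL if the family of infinite sets in `I⁺` is
a Halpern–Läuchli family. -/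
def IsHLIdeal (I : Set (Set ℕ)) : Prop :=
  IsHLFamily {A | A ∉ I ∧ A.Infinite}

/-- An ideal on a countable set `X` is HL if its image under some
(equivalently, any) bijection `X ≃ ℕ` is an HL ideal on `ω`. -/
def IsHLIdealOnCountable {X : Type*} (I : Set (Set X)) : Prop :=
  ∃ e : X ≃ ℕ, IsHLIdeal ((fun A : Set X => e '' A) '' I)

/-- The Katětov order on ideals. -/
def KatetovLE {X Y : Type*} (I : Set (Set X)) (J : Set (Set Y)) : Prop :=
  ∃ f : Y → X, ∀ A ∈ I, f ⁻¹' A ∈ J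

/-- The reaping number `𝔯`. -/
noncomputable def frakR : Cardinal :=
  sInf {κ | ∃ R : Set (Set ℕ), (∀ A ∈ R, A.Infinite) ∧ IsReapingFamily R ∧
    κ = Cardinal.mk ↥R}

/-- The density zero ideal `Z`. -/
def densityZero : Set (Set ℕ) :=
  {A | Filter.Tendsto (fun n : ℕ => ((A ∩ Iio n).ncard : ℝ) / (n : ℝ))
    Filter.atTop (nhds 0)}

/-- The ideal `ED` on `ω × ω`. -/
def EDIdeal : Set (Set (ℕ × ℕ)) :=
  {A | ∃ m k : ℕ, ∀ n ≥ m, {j : ℕ | (n, j) ∈ A}.Finite ∧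
    {j : ℕ | (n, j) ∈ A}.ncard ≤ k}
/-!
Fix a coloring `c` witnessing that `I` is not HL: `c` is constant on `p↾S` for a perfect tree `p`
only if `S ∈ I`. A level `m` is `k`-rich if every node of length `≤ k + 1` has extensions of both
colors at level `m`. The levels that are not `k`-rich form a set in `I`, for otherwise `c` would be
constant on a cone restricted to them. A set of levels, each rich relative to all smaller ones in
the set, carries a perfect tree (built by fusion) whose nodes at these levels all have color
`false`, so such a set lies in `I`.

If for some strictly increasing `k` the set of `k n`-rich levels in the blocks
`(k (n + 1), k (n + 2)]` is `I`-positive, its partition into blocks witnesses `ED ≤_K I↾X`: a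
selector of the blocks splits by parity into two such sparse sets. Otherwise the partition of `ω`
according to the least `j` for which a level is not `j`-rich works: a selector contains only
finitely many non-`K`-rich levels for each `K`, and is then covered, up to a finite set, by the
block set of a fast-growing `k`.
-/

namespace IsIdealOn

variable {X : Type*} {I : Set (Set X)} {A B F : Set X}

theorem mem_of_subset (hI : IsIdealOn I) (hB : B ∈ I) (h : A ⊆ B) : A ∈ I :=
  hI.2.2.1 A B h hB

theorem union_mem (hI : IsIdealOn I) (hA : A ∈ I) (hB : B ∈ I) : A ∪ B ∈ I :=
  hI.2.2.2 A B hA hB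

theorem mem_of_subset_union_finite (hI : IsIdealOn I) (hB : B ∈ I) (hF : F.Finite)
    (h : A ⊆ B ∪ F) : A ∈ I :=
  hI.mem_of_subset (hI.union_mem hB (hI.1 F hF)) h

theorem biUnion_mem (hI : IsIdealOn I) {α : Type*} {s : Set α} (hs : s.Finite)
    {f : α → Set X} (hf : ∀ a ∈ s, f a ∈ I) : ⋃ a ∈ s, f a ∈ I := by
  induction s, hs using Set.Finite.induction_on with
  | empty => simpa using hI.1 ∅ finite_empty
  | insert _ _ ih =>
    rw [biUnion_insert]
    exact hI.union_mem (hf _ (mem_insert _ _)) (ih fun a ha => hf a (mem_insert_of_mem _ ha))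

end IsIdealOn

theorem prefix_append_of_splitting (σ : List Bool → List Bool)
    (hσ : ∀ b ε, σ b ++ [ε] <+: σ (ε :: b)) (b₁ b₂ : List Bool) : σ b₂ <+: σ (b₁ ++ b₂) := by
  induction b₁ with
  | nil => exact List.prefix_rfl
  | cons ε b₁ ih => exact ih.trans ((List.prefix_append _ _).trans (hσ _ ε))

theorem isPerfectTree_of_splitting (σ : List Bool → List Bool)
    (hσ : ∀ b ε, σ b ++ [ε] <+: σ (ε :: b)) : IsPerfectTree {s | ∃ b, s <+: σ b} := by
  have hprefix : ∀ b ε, σ b <+: σ (ε :: b) := fun b ε => prefix_append_of_splitting σ hσ [ε] b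
  have hincomp : ∀ b ε, ¬ σ (ε :: b) <+: σ ((!ε) :: b) := by
    intro b ε h
    rcases List.prefix_or_prefix_of_prefix ((hσ b ε).trans h) (hσ b !ε) with h' | h' <;>
      simpa using h'.eq_of_length (by simp)
  refine ⟨⟨⟨σ [], [], List.prefix_rfl⟩, fun s ⟨b, hb⟩ t ht => ⟨b, ht.trans hb⟩, ?_⟩, ?_⟩
  · rintro s ⟨b, hb⟩
    refine ⟨σ (true :: b), ⟨_, List.prefix_rfl⟩, hb.trans (hprefix b true), fun h => ?_⟩
    have h₁ := (hσ b true).length_le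
    have h₂ := hb.length_le
    rw [List.length_append, List.length_singleton, ← h] at h₁
    omega
  · rintro s ⟨b, hb⟩
    exact ⟨σ (false :: b), ⟨_, List.prefix_rfl⟩, σ (true :: b), ⟨_, List.prefix_rfl⟩,
      hb.trans (hprefix b false), hb.trans (hprefix b true), hincomp b false, hincomp b true⟩

theorem isPerfectTree_cone (v : List Bool) :
    IsPerfectTree {s | ∃ b : List Bool, s <+: v ++ b.reverse} :=
  isPerfectTree_of_splitting (fun b : List Bool => v ++ b.reverse) (by simp)

-- `b` lists the branching bits, the most recent one first.
def fusionMap (ext : ℕ → List Bool → List Bool) : List Bool → List Bool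
  | [] => ext 0 []
  | ε :: b => ext (b.length + 1) (fusionMap ext b ++ [ε])

theorem exists_isPerfectTree_color_eq_of_levels {c : List Bool → Bool} {i : Bool} {ℓ : ℕ → ℕ}
    (hℓ : StrictMono ℓ)
    (hext : ∀ j, ∀ v : List Bool, v.length ≤ ℓ j + 1 →
      ∃ t, v <+: t ∧ t.length = ℓ (j + 1) ∧ c t = i) :
    ∃ p, IsPerfectTree p ∧ ∀ s ∈ p, ∀ j, s.length = ℓ (j + 1) → c s = i := by
  choose! ext hext_spec using hext
  have hσ : ∀ b, (fusionMap ext b).length = ℓ (b.length + 1) ∧ c (fusionMap ext b) = i := by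
    intro b
    induction b with
    | nil => exact (hext_spec 0 [] (by simp)).2
    | cons ε b ih => exact (hext_spec _ _ (by simp [ih.1])).2
  have hsplit : ∀ b ε, fusionMap ext b ++ [ε] <+: fusionMap ext (ε :: b) :=
    fun b ε => (hext_spec _ _ (by simp [(hσ b).1])).1
  refine ⟨_, isPerfectTree_of_splitting _ hsplit, ?_⟩
  rintro s ⟨b, hsb⟩ j hj
  have hjb : j ≤ b.length := by
    have := hsb.length_le
    rw [hj, (hσ b).1] at this
    exact Nat.succ_le_succ_iff.1 (hℓ.le_iff_le.1 this)
  set b₀ := b.drop (b.length - j)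
  have hb₀ : fusionMap ext b₀ <+: fusionMap ext b := by
    simpa [b₀] using prefix_append_of_splitting _ hsplit (b.take (b.length - j)) b₀
  have hlen : s.length = (fusionMap ext b₀).length := by
    rw [hj, (hσ b₀).1, List.length_drop, Nat.sub_sub_self hjb]
  have hsb₀ : s = fusionMap ext b₀ :=
    (List.prefix_of_prefix_length_le hsb hb₀ hlen.le).eq_of_length hlen
  exact hsb₀ ▸ (hσ b₀).2

def IsBadColoring (I : Set (Set ℕ)) (c : List Bool → Bool) : Prop :=
  ∀ p S i, IsPerfectTree p → (∀ s ∈ restrictTree p S, c s = i) → S ∈ I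

theorem exists_isBadColoring {I : Set (Set ℕ)} (hI : IsIdealOn I) (h : ¬ IsHLIdeal I) :
    ∃ c, IsBadColoring I c := by
  simp only [IsHLIdeal, IsHLFamily, not_forall, not_exists] at h
  obtain ⟨c, hc⟩ := h
  exact ⟨c, fun p S i hp hpS => by_contra fun hS =>
    hc p S ⟨⟨hS, fun hfin => hS (hI.1 S hfin)⟩, hp, i, hpS⟩⟩

def richLevels (c : List Bool → Bool) (k : ℕ) : Set ℕ :=
  {m | ∀ v : List Bool, v.length ≤ k + 1 → ∀ i, ∃ t, v <+: t ∧ t.length = m ∧ c t = i}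

theorem richLevels_anti {c : List Bool → Bool} {k k' : ℕ} (h : k ≤ k') :
    richLevels c k' ⊆ richLevels c k :=
  fun _ hm v hv => hm v (by omega)

theorem lt_of_mem_richLevels {c : List Bool → Bool} {k m : ℕ} (hm : m ∈ richLevels c k) :
    k < m := by
  obtain ⟨t, hvt, rfl, -⟩ := hm (List.replicate (k + 1) false) (by simp) false
  simpa using hvt.length_le

namespace IsBadColoring

variable {I : Set (Set ℕ)} {c : List Bool → Bool}

theorem setOf_forall_color_ne_mem (hI : IsIdealOn I) (hc : IsBadColoring I c)
    (v : List Bool) (i : Bool) :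
    {m | ∀ t, v <+: t → t.length = m → c t ≠ i} ∈ I := by
  set L := {m | ∀ t, v <+: t → t.length = m → c t ≠ i}
  have hhigh : L ∩ Ioi v.length ∈ I := by
    refine hc _ _ (!i) (isPerfectTree_cone v) ?_
    rintro s ⟨⟨b, hsb⟩, hsL, hlen⟩
    have hvs : v <+: s := List.prefix_of_prefix_length_le (List.prefix_append v _) hsb hlen.le
    exact Bool.eq_not_iff.2 (hsL s hvs rfl)
  exact hI.mem_of_subset_union_finite hhigh (finite_Iic v.length)
    fun m hm => (lt_or_ge v.length m).imp (fun h => ⟨hm, h⟩) id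

theorem compl_richLevels_mem (hI : IsIdealOn I) (hc : IsBadColoring I c) (k : ℕ) :
    (richLevels c k)ᶜ ∈ I := by
  refine hI.mem_of_subset (hI.biUnion_mem (List.finite_length_le Bool (k + 1)) fun v _ =>
    hI.biUnion_mem finite_univ fun i _ => hc.setOf_forall_color_ne_mem hI v i) ?_
  intro m hm
  simp only [richLevels, mem_compl_iff, mem_ofPred_eq, not_forall, not_exists, not_and] at hm
  obtain ⟨v, hv, i, hvi⟩ := hm
  exact mem_biUnion hv (mem_biUnion (mem_univ i) hvi)

theorem mem_of_sparse (hI : IsIdealOn I) (hc : IsBadColoring I c) {S : Set ℕ}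
    (hS : ∀ m ∈ S, ∀ m' ∈ S, m < m' → m' ∈ richLevels c m) : S ∈ I := by
  by_cases hfin : S.Finite
  · exact hI.1 S hfin
  set ℓ := Nat.nth (· ∈ S)
  have hℓ : StrictMono ℓ := Nat.nth_strictMono hfin
  have hℓS : ∀ j, ℓ j ∈ S := Nat.nth_mem_of_infinite hfin
  obtain ⟨p, hp, hpc⟩ := exists_isPerfectTree_color_eq_of_levels hℓ (i := false)
    fun j v hv => hS _ (hℓS j) _ (hℓS (j + 1)) (hℓ j.lt_succ_self) v hv false
  -- the lowest level of `S` carries no richness guarantee, so it is left out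
  have htail : S ∩ Ioi (ℓ 0) ∈ I := by
    refine hc p _ false hp ?_
    rintro s ⟨hsp, hsS, hlen⟩
    obtain ⟨j, hj⟩ : s.length ∈ range ℓ := (Nat.range_nth_of_infinite hfin).symm ▸ hsS
    obtain _ | j := j
    · exact absurd hj hlen.ne
    · exact hpc s hsp j hj.symm
  exact hI.mem_of_subset_union_finite htail (finite_Iic (ℓ 0))
    fun m hm => (lt_or_ge (ℓ 0) m).imp (fun h => ⟨hm, h⟩) id

end IsBadColoring

theorem IsIdealOn.mem_of_ncard_fiber_le {X β : Type*} [LinearOrder X] {I : Set (Set X)}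
    (hI : IsIdealOn I) (π : X → β) {T : Set X} {k : ℕ}
    (hsel : ∀ S ⊆ T, InjOn π S → S ∈ I) (hfin : ∀ n, (T ∩ π ⁻¹' {n}).Finite)
    (hcard : ∀ n, (T ∩ π ⁻¹' {n}).ncard ≤ k) : T ∈ I := by
  set rank : X → ℕ := fun m => (T ∩ π ⁻¹' {π m} ∩ Iio m).ncard
  have hrank_lt : ∀ m ∈ T, rank m < k := by
    intro m hm
    refine (Set.ncard_lt_ncard ?_ (hfin _)).trans_le (hcard (π m))
    exact (ssubset_iff_of_subset inter_subset_left).2 ⟨m, ⟨hm, rfl⟩, fun h => lt_irrefl m h.2⟩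
  have hrank_strictMono : ∀ m ∈ T, ∀ m', π m = π m' → m < m' → rank m < rank m' := by
    intro m hm m' hπ hlt
    refine Set.ncard_lt_ncard ((ssubset_iff_of_subset ?_).2 ⟨m, ⟨⟨hm, hπ⟩, hlt⟩,
      fun h => lt_irrefl m h.2⟩) ((hfin _).subset inter_subset_left)
    rintro x ⟨⟨hxT, hx⟩, hxm⟩
    exact ⟨⟨hxT, hx.trans hπ⟩, (mem_Iio.1 hxm).trans hlt⟩
  refine hI.mem_of_subset
    (hI.biUnion_mem (finite_Iio k) fun r _ => hsel {m ∈ T | rank m = r} (sep_subset _ _) ?_)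
    (fun m hm => mem_biUnion (mem_Iio.2 (hrank_lt m hm)) ⟨hm, rfl⟩)
  rintro m ⟨hm, rfl⟩ m' ⟨hm', hr⟩ hπ
  rcases lt_trichotomy m m' with h | h | h
  · exact absurd hr (hrank_strictMono m hm m' hπ h).ne'
  · exact h
  · exact absurd hr (hrank_strictMono m' hm' m hπ.symm h).ne

theorem katetovLE_EDIdeal_of_injOn {I : Set (Set ℕ)} (hI : IsIdealOn I) {X : Set ℕ}
    (π : ℕ → ℕ) (hfib : ∀ n, X ∩ π ⁻¹' {n} ∈ I) (hsel : ∀ S ⊆ X, InjOn π S → S ∈ I) :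
    KatetovLE EDIdeal {B : Set X | ∃ A ∈ I, B = Subtype.val ⁻¹' A} := by
  refine ⟨fun x => (π x, x), ?_⟩
  rintro A ⟨m₀, k, hA⟩
  refine ⟨X ∩ {m | (π m, m) ∈ A}, ?_, by ext; simp⟩
  set T := X ∩ {m | (π m, m) ∈ A}
  have hlow : T ∩ {m | π m < m₀} ∈ I :=
    hI.mem_of_subset (hI.biUnion_mem (finite_Iio m₀) fun n _ => hfib n)
      (fun m hm => mem_biUnion hm.2 ⟨hm.1.1, rfl⟩)
  have hfiber : ∀ n, (T ∩ {m | m₀ ≤ π m} ∩ π ⁻¹' {n}).Finite ∧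
      (T ∩ {m | m₀ ≤ π m} ∩ π ⁻¹' {n}).ncard ≤ k := by
    intro n
    by_cases hn : m₀ ≤ n
    · have hsub : T ∩ {m | m₀ ≤ π m} ∩ π ⁻¹' {n} ⊆ {j | (n, j) ∈ A} := by
        rintro m ⟨⟨⟨-, hm⟩, -⟩, rfl⟩
        exact hm
      exact ⟨(hA n hn).1.subset hsub, (ncard_le_ncard hsub (hA n hn).1).trans (hA n hn).2⟩
    · have hempty : T ∩ {m | m₀ ≤ π m} ∩ π ⁻¹' {n} = ∅ :=
        eq_empty_of_forall_notMem (by rintro m ⟨⟨-, hm⟩, rfl⟩; exact hn hm)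
      simp [hempty]
  have hhigh : T ∩ {m | m₀ ≤ π m} ∈ I :=
    hI.mem_of_ncard_fiber_le π
      (fun S hS => hsel S (hS.trans (inter_subset_left.trans inter_subset_left)))
      (fun n => (hfiber n).1) (fun n => (hfiber n).2)
  exact hI.mem_of_subset (hI.union_mem hlow hhigh)
    (fun m hm => (lt_or_ge (π m) m₀).imp (fun h => ⟨hm, h⟩) (fun h => ⟨hm, h⟩))

theorem StrictMono.exists_lt_le {k : ℕ → ℕ} (hk : StrictMono k) {m : ℕ} (hm : k 0 < m) :
    ∃ n, k n < m ∧ m ≤ k (n + 1) := by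
  have hex : ∃ n, m ≤ k n := ⟨m, hk.le_apply⟩
  obtain ⟨n, hn⟩ : ∃ n, Nat.find hex = n + 1 :=
    Nat.exists_eq_add_one.2 (Nat.pos_of_ne_zero fun h => (h ▸ Nat.find_spec hex).not_gt hm)
  exact ⟨n, not_le.1 (Nat.find_min hex (by omega)), hn ▸ Nat.find_spec hex⟩

def blockSet (c : List Bool → Bool) (k : ℕ → ℕ) : Set ℕ :=
  {m | ∃ n, k (n + 1) < m ∧ m ≤ k (n + 2) ∧ m ∈ richLevels c (k n)}

theorem IsBadColoring.katetovLE_blockSet {I : Set (Set ℕ)} {c : List Bool → Bool}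
    (hI : IsIdealOn I) (hc : IsBadColoring I c) {k : ℕ → ℕ} (hk : StrictMono k) :
    KatetovLE EDIdeal {B : Set (blockSet c k) | ∃ A ∈ I, B = Subtype.val ⁻¹' A} := by
  choose! π hπ using fun m (hm : m ∈ blockSet c k) => hm
  refine katetovLE_EDIdeal_of_injOn hI π
    (fun n => hI.mem_of_subset (hI.1 _ (finite_Iic (k (n + 2)))) ?_) fun S hSX hinj => ?_
  · rintro m ⟨hm, rfl⟩
    exact (hπ m hm).2.1
  have hsparse : ∀ p, ∀ m ∈ {m ∈ S | π m % 2 = p}, ∀ m' ∈ {m ∈ S | π m % 2 = p},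
      m < m' → m' ∈ richLevels c m := by
    rintro p m ⟨hm, rfl⟩ m' ⟨hm', hpar⟩ hlt
    obtain ⟨hm_gt, hm_le, -⟩ := hπ m (hSX hm)
    obtain ⟨-, hm'_le, hm'_rich⟩ := hπ m' (hSX hm')
    have hπlt : π m < π m' := by
      refine lt_of_le_of_ne ?_ fun h => hlt.ne (hinj hm hm' h)
      by_contra! h
      have := hk.monotone (show π m' + 2 ≤ π m + 1 by omega)
      omega
    exact richLevels_anti (hm_le.trans (hk.monotone (by omega))) hm'_rich
  exact hI.mem_of_subset
    (hI.union_mem (hc.mem_of_sparse hI (hsparse 0)) (hc.mem_of_sparse hI (hsparse 1)))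
    (fun m hm => (Nat.mod_two_eq_zero_or_one (π m)).imp (fun h => ⟨hm, h⟩) (fun h => ⟨hm, h⟩))

theorem mem_of_forall_finite_diff_richLevels {I : Set (Set ℕ)} {c : List Bool → Bool}
    (hI : IsIdealOn I) (hblock : ∀ k, StrictMono k → blockSet c k ∈ I) {S : Set ℕ}
    (hS : ∀ K, (S \ richLevels c K).Finite) : S ∈ I := by
  choose B hB using fun K => (hS K).bddAbove
  -- every point of `S` above `κ (n + 1)` is `κ n`-rich
  set κ : ℕ → ℕ := fun n => Nat.rec 0 (fun _ x => x + B x + 1) n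
  have hκ : ∀ n, κ (n + 1) = κ n + B (κ n) + 1 := fun n => rfl
  have hκmono : StrictMono κ := strictMono_nat_of_lt_succ fun n => by rw [hκ]; omega
  refine hI.mem_of_subset_union_finite (hblock κ hκmono) (finite_Iic (κ 1)) fun m hm => ?_
  refine (le_or_gt m (κ 1)).symm.imp (fun h1 => ?_) id
  obtain ⟨n, hn_lt, hn_le⟩ : ∃ n, κ (n + 1) < m ∧ m ≤ κ (n + 2) :=
    (hκmono.comp (strictMono_id.add_const 1)).exists_lt_le h1
  refine ⟨n, hn_lt, hn_le, by_contra fun hrich => ?_⟩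
  have := hB (κ n) ⟨hm, hrich⟩
  have := hκ n
  omega

theorem IsBadColoring.katetovLE_univ {I : Set (Set ℕ)} {c : List Bool → Bool}
    (hI : IsIdealOn I) (hc : IsBadColoring I c) (hblock : ∀ k, StrictMono k → blockSet c k ∈ I) :
    KatetovLE EDIdeal {B : Set (univ : Set ℕ) | ∃ A ∈ I, B = Subtype.val ⁻¹' A} := by
  classical
  have hex : ∀ m, ∃ j, m ∉ richLevels c j := fun m => ⟨m, fun h => (lt_of_mem_richLevels h).false⟩
  refine katetovLE_EDIdeal_of_injOn hI (fun m => Nat.find (hex m)) (fun n => ?_) fun S _ hinj => ?_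
  · refine hI.mem_of_subset (hc.compl_richLevels_mem hI n) ?_
    rintro m ⟨-, rfl⟩
    exact Nat.find_spec (hex m)
  · refine mem_of_forall_finite_diff_richLevels hI hblock fun K => ?_
    refine Finite.of_finite_image ((finite_Iic K).subset ?_) (hinj.mono sdiff_subset)
    rintro _ ⟨m, ⟨-, hm⟩, rfl⟩
    exact Nat.find_min' (hex m) hm

/-- If `I` is not HL, then `ED ≤_K I↾X` for some `X ∈ I⁺`. -/
theorem stmt10 (I : Set (Set ℕ)) (hI : IsIdealOn I) (h : ¬ IsHLIdeal I) :
    ∃ X : Set ℕ, X ∉ I ∧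
      KatetovLE EDIdeal {B : Set ↥X | ∃ A ∈ I, B = Subtype.val ⁻¹' A} := by
  obtain ⟨c, hc⟩ := exists_isBadColoring hI h
  by_cases hblock : ∃ k, StrictMono k ∧ blockSet c k ∉ I
  · obtain ⟨k, hk, hX⟩ := hblock
    exact ⟨blockSet c k, hX, hc.katetovLE_blockSet hI hk⟩
  · push Not at hblock
    exact ⟨univ, hI.2.1, hc.katetovLE_univ hI hblock⟩
end

section
/- The ideal nwd of nowhere dense subsets of the rationals ℚ is an HL ideal. -/
open Set

/-!
Split on whether, for some node `s`, the levels `ℓ ≥ |s|` at which every extension of `s` of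
length `ℓ` has colour `true` form a somewhere dense set (pulled back to the space). If so, the
cone above `s` together with those levels is a `true`-monochromatic witness. If not, then for
any finite set of nodes and any nonempty open set there is a level in that open set at which
every one of the nodes has a `false`-coloured extension, because a finite union of nowhere
dense sets misses a point of every nonempty open set. A fusion construction then builds a
perfect tree that is `false`-coloured on a set of levels meeting every member of a countable
base, hence dense.
-/

open Topology

lemma isPerfectTree_of_forall_exists_split {p : Set (List Bool)} (hne : p.Nonempty)
    (hclosed : ∀ s ∈ p, ∀ t : List Bool, t <+: s → t ∈ p)
    (hsplit : ∀ s ∈ p, ∃ u, s <+: u ∧ ∀ b : Bool, u ++ [b] ∈ p) : IsPerfectTree p := by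
  have hbranch : ∀ s ∈ p, ∃ t₀ ∈ p, ∃ t₁ ∈ p,
      s <+: t₀ ∧ s <+: t₁ ∧ ¬ t₀ <+: t₁ ∧ ¬ t₁ <+: t₀ := by
    intro s hs
    obtain ⟨u, hsu, hu⟩ := hsplit s hs
    exact ⟨u ++ [false], hu false, u ++ [true], hu true, hsu.trans (u.prefix_append _),
      hsu.trans (u.prefix_append _), by simp, by simp⟩
  refine ⟨⟨hne, hclosed, fun s hs => ?_⟩, hbranch⟩
  obtain ⟨t₀, ht₀, t₁, -, hst₀, hst₁, ht₀₁, -⟩ := hbranch s hs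
  exact ⟨t₀, ht₀, hst₀, by rintro rfl; exact ht₀₁ hst₁⟩

def cone (s : List Bool) : Set (List Bool) :=
  {w | w <+: s ∨ s <+: w}

lemma isPerfectTree_cone_s11 (s : List Bool) : IsPerfectTree (cone s) := by
  refine isPerfectTree_of_forall_exists_split ⟨s, Or.inl s.prefix_refl⟩ ?_ ?_
  · rintro w (hw | hw) t ht
    · exact Or.inl (ht.trans hw)
    · rcases le_total t.length s.length with hl | hl
      · exact Or.inl (List.prefix_of_prefix_length_le ht hw hl)
      · exact Or.inr (List.prefix_of_prefix_length_le hw ht hl)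
  · rintro w (hw | hw)
    · exact ⟨s, hw, fun b => Or.inr (s.prefix_append _)⟩
    · exact ⟨w, w.prefix_refl, fun b => Or.inr (hw.trans (w.prefix_append _))⟩

def monochromaticLevels (c : List Bool → Bool) (i : Bool) (s : List Bool) : Set ℕ :=
  {ℓ | s.length ≤ ℓ ∧ ∀ t, s <+: t → t.length = ℓ → c t = i}

lemma forall_mem_restrictTree_cone_monochromaticLevels (c : List Bool → Bool) (i : Bool)
    (s : List Bool) : ∀ w ∈ restrictTree (cone s) (monochromaticLevels c i s), c w = i := by
  rintro w ⟨hw | hw, hsw, hmono⟩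
  · obtain rfl := hw.eq_of_length (le_antisymm hw.length_le hsw)
    exact hmono w w.prefix_refl rfl
  · exact hmono w hw rfl

section Fusion

variable {c : List Bool → Bool} {i : Bool}

def IsFusionStep (c : List Bool → Bool) (i : Bool) (V : Set ℕ) (S S' : Finset (List Bool)) :
    Prop :=
  (∃ ℓ ∈ V, ∀ t ∈ S', t.length = ℓ) ∧ (∀ t ∈ S', c t = i ∧ ∃ s ∈ S, s <+: t) ∧
    ∀ s ∈ S, ∀ b : Bool, ∃ t ∈ S', s ++ [b] <+: t

lemma exists_isFusionStep {V : Set ℕ}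
    (h : ∀ F : Finset (List Bool), ∃ ℓ ∈ V, ∀ s ∈ F, ∃ t, s <+: t ∧ t.length = ℓ ∧ c t = i)
    (S : Finset (List Bool)) : ∃ S', IsFusionStep c i V S S' := by
  classical
  obtain ⟨ℓ, hℓ, hext⟩ := h (Finset.image₂ (fun s b => s ++ [b]) S Finset.univ)
  choose! f hf using hext
  refine ⟨(Finset.image₂ (fun s b => s ++ [b]) S Finset.univ).image f,
    ⟨ℓ, hℓ, ?_⟩, ?_, ?_⟩
  · simp only [Finset.mem_image, Finset.mem_image₂]
    rintro _ ⟨_, ⟨s, hs, b, hb, rfl⟩, rfl⟩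
    exact (hf _ (Finset.mem_image₂_of_mem hs hb)).2.1
  · simp only [Finset.mem_image, Finset.mem_image₂]
    rintro _ ⟨_, ⟨s, hs, b, hb, rfl⟩, rfl⟩
    obtain ⟨hpre, -, hc⟩ := hf _ (Finset.mem_image₂_of_mem hs hb)
    exact ⟨hc, s, hs, (s.prefix_append _).trans hpre⟩
  · intro s hs b
    have hmem := Finset.mem_image₂_of_mem (f := fun s b => s ++ [b]) hs (Finset.mem_univ b)
    exact ⟨_, Finset.mem_image_of_mem f hmem, (hf _ hmem).1⟩

def IsFusionSequence (c : List Bool → Bool) (i : Bool) (U : ℕ → Set ℕ)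
    (S : ℕ → Finset (List Bool)) : Prop :=
  ∀ j, IsFusionStep c i (U j) (S j) (S (j + 1))

def fusionTree (S : ℕ → Finset (List Bool)) : Set (List Bool) :=
  {w | ∃ j, ∃ u ∈ S j, w <+: u}

variable {U : ℕ → Set ℕ} {S : ℕ → Finset (List Bool)}

lemma exists_extension_mem_of_isFusionStep (hS : IsFusionSequence c i U S)
    {k m : ℕ} (hkm : k ≤ m) {u : List Bool} (hu : u ∈ S k) : ∃ t ∈ S m, u <+: t := by
  induction m, hkm using Nat.le_induction with
  | base => exact ⟨u, hu, u.prefix_refl⟩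
  | succ m _ ih =>
    obtain ⟨t, ht, hut⟩ := ih
    obtain ⟨t', ht', htt'⟩ := (hS m).2.2 t ht false
    exact ⟨t', ht', hut.trans ((t.prefix_append _).trans htt')⟩

lemma exists_prefix_mem_of_isFusionStep (hS : IsFusionSequence c i U S)
    {k m : ℕ} (hkm : k ≤ m) {t : List Bool} (ht : t ∈ S m) : ∃ s ∈ S k, s <+: t := by
  induction m, hkm using Nat.le_induction generalizing t with
  | base => exact ⟨t, ht, t.prefix_refl⟩
  | succ m _ ih =>
    obtain ⟨-, s', hs', hs't⟩ := (hS m).2.1 t ht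
    obtain ⟨s, hs, hss'⟩ := ih hs'
    exact ⟨s, hs, hss'.trans hs't⟩

lemma mem_of_mem_fusionTree (hS : IsFusionSequence c i U S)
    {w : List Bool} (hw : w ∈ fusionTree S) {j : ℕ} (hlen : ∀ t ∈ S j, t.length = w.length) :
    w ∈ S j := by
  obtain ⟨k, u, hu, hwu⟩ := hw
  obtain ⟨u', hu', huu'⟩ := exists_extension_mem_of_isFusionStep hS (le_max_left k j) hu
  obtain ⟨s, hs, hsu'⟩ := exists_prefix_mem_of_isFusionStep hS (le_max_right k j) hu'
  have hws : w <+: s := List.prefix_of_prefix_length_le (hwu.trans huu') hsu' (hlen s hs).ge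
  rwa [hws.eq_of_length (hlen s hs).symm]

lemma isPerfectTree_fusionTree (hS : IsFusionSequence c i U S)
    (h₀ : [] ∈ S 0) : IsPerfectTree (fusionTree S) := by
  refine isPerfectTree_of_forall_exists_split ⟨[], 0, [], h₀, List.nil_prefix⟩ ?_ ?_
  · rintro w ⟨j, u, hu, hwu⟩ t htw
    exact ⟨j, u, hu, htw.trans hwu⟩
  · rintro w ⟨j, u, hu, hwu⟩
    refine ⟨u, hwu, fun b => ?_⟩
    obtain ⟨t, ht, hut⟩ := (hS j).2.2 u hu b
    exact ⟨j + 1, t, ht, hut⟩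

theorem exists_isPerfectTree_forall_mem_restrictTree_eq (h : ∀ j (F : Finset (List Bool)),
      ∃ ℓ ∈ U j, ∀ s ∈ F, ∃ t, s <+: t ∧ t.length = ℓ ∧ c t = i) :
    ∃ p, ∃ A : Set ℕ, IsPerfectTree p ∧ (∀ j, (A ∩ U j).Nonempty) ∧
      ∀ s ∈ restrictTree p A, c s = i := by
  choose next hnext using fun j => exists_isFusionStep (h j)
  let S : ℕ → Finset (List Bool) := fun j => Nat.rec {[]} next j
  have hS : IsFusionSequence c i U S := fun j => hnext j (S j)
  have h₀ : [] ∈ S 0 := Finset.mem_singleton_self _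
  refine ⟨fusionTree S, {ℓ | ∃ j, ∃ t ∈ S (j + 1), t.length = ℓ},
    isPerfectTree_fusionTree hS h₀, fun j => ?_, ?_⟩
  · obtain ⟨ℓ, hℓ, hlen⟩ := (hS j).1
    obtain ⟨t, ht, -⟩ := exists_extension_mem_of_isFusionStep hS (Nat.zero_le (j + 1)) h₀
    exact ⟨ℓ, ⟨j, t, ht, hlen t ht⟩, hℓ⟩
  · rintro w ⟨hw, j, t, ht, htw⟩
    obtain ⟨ℓ, -, hlen⟩ := (hS j).1
    have hwS : w ∈ S (j + 1) := mem_of_mem_fusionTree hS hw (j := j + 1) fun t' ht' =>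
      (hlen t' ht').trans ((hlen t ht).symm.trans htw)
    exact ((hS j).2.1 w hwS).1

end Fusion

section NowhereDense

variable {X : Type*} [TopologicalSpace X]

lemma IsNowhereDense.union {s t : Set X} (hs : IsNowhereDense s) (ht : IsNowhereDense t) :
    IsNowhereDense (s ∪ t) := by
  rw [IsNowhereDense, closure_union,
    interior_union_isClosed_of_interior_empty isClosed_closure ht, hs]

lemma Finset.isNowhereDense_biUnion {ι : Type*} (F : Finset ι) {f : ι → Set X}
    (h : ∀ i ∈ F, IsNowhereDense (f i)) : IsNowhereDense (⋃ i ∈ F, f i) := by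
  classical
  induction F using Finset.induction_on with
  | empty => simp
  | insert a F _ ih =>
    rw [Finset.set_biUnion_insert]
    exact (h a (F.mem_insert_self a)).union (ih fun i hi => h i (F.mem_insert_of_mem hi))

lemma Set.Finite.isNowhereDense [T1Space X] [∀ x : X, (𝓝[≠] x).NeBot] {s : Set X}
    (hs : s.Finite) : IsNowhereDense s := by
  rw [← s.biUnion_of_singleton, ← hs.coe_toFinset]
  refine hs.toFinset.isNowhereDense_biUnion fun x _ => ?_
  rw [(isClosed_singleton (x := x)).isNowhereDense_iff, interior_singleton]

lemma IsOpen.not_subset_of_isNowhereDense {U s : Set X} (hU : IsOpen U) (hne : U.Nonempty)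
    (hs : IsNowhereDense s) : ¬ U ⊆ s := fun hUs =>
  hne.ne_empty (subset_empty_iff.1 (hs ▸ interior_maximal (hUs.trans subset_closure) hU))

lemma Dense.not_isNowhereDense [Nonempty X] {s : Set X} (hs : Dense s) :
    ¬ IsNowhereDense s := by
  rw [IsNowhereDense, hs.closure_eq, interior_univ]
  exact univ_nonempty.ne_empty

lemma exists_seq_isOpen_nonempty_forall_inter_nonempty_dense [SecondCountableTopology X]
    [Nonempty X] : ∃ V : ℕ → Set X, (∀ j, IsOpen (V j) ∧ (V j).Nonempty) ∧
      ∀ s : Set X, (∀ j, (s ∩ V j).Nonempty) → Dense s := by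
  obtain ⟨b, hbc, hb₀, hb⟩ := TopologicalSpace.exists_countable_basis X
  obtain ⟨x⟩ := ‹Nonempty X›
  obtain ⟨o, ho, -⟩ := hb.exists_subset_of_mem_open (mem_univ x) isOpen_univ
  obtain ⟨V, rfl⟩ := hbc.exists_eq_range ⟨o, ho⟩
  refine ⟨V, fun j => ⟨hb.isOpen (mem_range_self j),
    nonempty_iff_ne_empty.2 fun h => hb₀ (h ▸ mem_range_self j)⟩, fun s hs => ?_⟩
  rw [hb.dense_iff]
  rintro _ ⟨j, rfl⟩ -
  rw [inter_comm]
  exact hs j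

end NowhereDense

lemma IsHLFamily.mono {R R' : Set (Set ℕ)} (h : IsHLFamily R) (hRR' : R ⊆ R') :
    IsHLFamily R' := fun c => by
  obtain ⟨p, A, hA, hp⟩ := h c
  exact ⟨p, A, hRR' hA, hp⟩

lemma mem_image_image_equiv_iff {X Y : Type*} (e : X ≃ Y) {I : Set (Set X)} {A : Set Y} :
    A ∈ (fun B : Set X => e '' B) '' I ↔ e ⁻¹' A ∈ I := by
  constructor
  · rintro ⟨B, hB, rfl⟩
    rwa [e.preimage_image]
  · exact fun h => ⟨_, h, e.image_preimage A⟩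

section HL

variable {X : Type*} [TopologicalSpace X] [T1Space X] [∀ x : X, (𝓝[≠] x).NeBot]

lemma exists_mem_forall_extension_of_isNowhereDense (e : X ≃ ℕ) {c : List Bool → Bool}
    {i : Bool} (hc : ∀ s, IsNowhereDense (e ⁻¹' monochromaticLevels c (!i) s)) {V : Set X}
    (hV : IsOpen V) (hne : V.Nonempty) (F : Finset (List Bool)) :
    ∃ ℓ ∈ e.symm ⁻¹' V, ∀ s ∈ F, ∃ t, s <+: t ∧ t.length = ℓ ∧ c t = i := by
  have hN : IsNowhereDense
      (e ⁻¹' Iio (F.sup List.length) ∪ ⋃ s ∈ F, e ⁻¹' monochromaticLevels c (!i) s) :=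
    (((finite_Iio _).preimage e.injective.injOn).isNowhereDense).union
      (F.isNowhereDense_biUnion fun s _ => hc s)
  obtain ⟨x, hxV, hxN⟩ := not_subset.1 (hV.not_subset_of_isNowhereDense hne hN)
  simp only [mem_union, mem_preimage, mem_Iio, mem_iUnion, not_or, not_lt, not_exists] at hxN
  refine ⟨e x, by simpa using hxV, fun s hs => ?_⟩
  have hlen : s.length ≤ e x := (F.le_sup hs).trans hxN.1
  simpa [monochromaticLevels, hlen] using hxN.2 s hs

theorem isHLFamily_not_isNowhereDense_preimage [SecondCountableTopology X] (e : X ≃ ℕ) :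
    IsHLFamily {A | ¬ IsNowhereDense (e ⁻¹' A)} := by
  intro c
  by_cases h : ∃ s, ¬ IsNowhereDense (e ⁻¹' monochromaticLevels c true s)
  · obtain ⟨s, hs⟩ := h
    exact ⟨cone s, _, hs, isPerfectTree_cone_s11 s, true,
      forall_mem_restrictTree_cone_monochromaticLevels c true s⟩
  · push Not at h
    have : Nonempty X := ⟨e.symm 0⟩
    obtain ⟨V, hV, hVdense⟩ := exists_seq_isOpen_nonempty_forall_inter_nonempty_dense (X := X)
    obtain ⟨p, A, hp, hAV, hpA⟩ := exists_isPerfectTree_forall_mem_restrictTree_eq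
      (U := fun j => e.symm ⁻¹' V j)
      fun j => exists_mem_forall_extension_of_isNowhereDense e (i := false) h (hV j).1 (hV j).2
    refine ⟨p, A, Dense.not_isNowhereDense (hVdense _ fun j => ?_), hp, false, hpA⟩
    obtain ⟨ℓ, hℓA, hℓV⟩ := hAV j
    exact ⟨e.symm ℓ, by simpa using hℓA, hℓV⟩

end HL

/-- The ideal `nwd` of nowhere dense subsets of `ℚ` is an HL ideal. -/
theorem stmt11 : IsHLIdealOnCountable {A : Set ℚ | IsNowhereDense A} := by
  let e := Denumerable.eqv ℚ
  refine ⟨e, (isHLFamily_not_isNowhereDense_preimage e).mono fun A hA => ?_⟩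
  exact ⟨(mem_image_image_equiv_iff e).not.2 hA,
    fun hfin => hA (hfin.preimage e.injective.injOn).isNowhereDense⟩
end
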